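/- Let K be a commutative ring, v, w : ℕ → K, and A^{v,w}(n,k) defined by the recurrence A^{v,w}(n,k) = A^{v,w}(n-1,k-1) + (v_{n-1}+w_k)·A^{v,w}(n-1,k) with standard initial conditions. Then A^{v,w}(n,k) = ∑_{j=k}^{n} (−1)^{j−k} A^{v,w}(n+1, j+1) · ∏_{i=k+1}^{j} (v_n + w_i). -/

import Mathlib

open Finset

/-- The generalized two-weight array `A^{v,w}(n,k)`. -/
def A {K : Type*} [CommRing K] (v w : ℕ → K) : ℕ → ℕ → K
  | 0, 0 => 1
  | 0, _ + 1 => 0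
  | n + 1, 0 => (v n + w 0) * A v w n 0
  | n + 1, k + 1 => A v w n k + (v n + w (k + 1)) * A v w n (k + 1)

/-! Writing `T j = (-1)^(j-k) A(n,j) ∏_{i=k+1}^{j} (v_n + w_i)`, the recurrence for `A(n+1, j+1)`
shows that the `j`-th summand is `T j - T (j+1)`. The sum therefore telescopes to
`T k - T (n+1) = A(n,k) - 0`, since `A(n, n+1) = 0`. -/

section

variable {K : Type*} [CommRing K] (v w : ℕ → K)

theorem A_eq_zero_of_lt : ∀ {n k : ℕ}, n < k → A v w n k = 0
  | 0, _ + 1, _ => rfl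
  | n + 1, k + 1, h => by
    rw [A, A_eq_zero_of_lt (by omega), A_eq_zero_of_lt (by omega), mul_zero, add_zero]

def alternatingTerm (n k j : ℕ) : K :=
  (-1) ^ (j - k) * A v w n j * ∏ i ∈ Icc (k + 1) j, (v n + w i)

theorem alternatingTerm_self (n k : ℕ) : alternatingTerm v w n k k = A v w n k := by
  simp [alternatingTerm]

theorem alternatingTerm_of_lt {n j : ℕ} (k : ℕ) (h : n < j) : alternatingTerm v w n k j = 0 := by
  simp [alternatingTerm, A_eq_zero_of_lt v w h]

theorem alternatingTerm_sub_succ {n k j : ℕ} (hkj : k ≤ j) :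
    alternatingTerm v w n k j - alternatingTerm v w n k (j + 1) =
      (-1) ^ (j - k) * A v w (n + 1) (j + 1) * ∏ i ∈ Icc (k + 1) j, (v n + w i) := by
  rw [alternatingTerm, alternatingTerm, A, prod_Icc_succ_top (by omega),
    show j + 1 - k = j - k + 1 by omega, pow_succ]
  ring

theorem sum_alternatingTerm_sub_succ {n k : ℕ} (hkn : k ≤ n) :
    ∑ j ∈ Icc k n, (alternatingTerm v w n k j - alternatingTerm v w n k (j + 1)) =
      A v w n k := by
  have telescope := sum_Icc_sub hkn (fun j => -alternatingTerm v w n k j)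
  simp only [neg_sub_neg] at telescope
  rw [telescope, alternatingTerm_self, alternatingTerm_of_lt v w k n.lt_succ_self, sub_zero]

end

theorem stmt_7 {K : Type*} [CommRing K] (v w : ℕ → K) (n k : ℕ) (hkn : k ≤ n) :
    A v w n k =
      ∑ j ∈ Finset.Icc k n,
        (-1 : K) ^ (j - k) * A v w (n + 1) (j + 1) * ∏ i ∈ Finset.Icc (k + 1) j, (v n + w i) := by
  rw [← sum_alternatingTerm_sub_succ v w hkn]
  exact sum_congr rfl fun j hj => alternatingTerm_sub_succ v w (mem_Icc.1 hj).1
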